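/- Define U₅=(A₅,F₅) with A₅=⋃_{i∈ℕ}{(i,1),…,(i,i)} and F₅=⋃_{i∈ℕ}{fᵢ, f_{i,1},…,f_{i,i}}, where fᵢ(a)=1 iff a∈{(i,1),…,(i,i)} and f_{i,j}(a)=1 iff a=(i,j). Then for every i∈ℕ, the system Sᵢ={fᵢ(x)=1, f_{i,1}(x)=0,…,f_{i,i}(x)=0} is inconsistent on A₅ but every proper subsystem of Sᵢ is consistent. Hence U₅ is not r-i-reduced for any r. -/

import Mathlib

/-!
A solution of `Sᵢ` is some `(i, j)` with `j ≤ i`, and it violates `f_{i,j}(x) = 0`. Dropping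
`fᵢ(x) = 1` leaves a system solved by `(i + 1, 1)`, dropping `f_{i,j}(x) = 0` one solved by
`(i, j)`. So `Sᵢ` is a minimal inconsistent system over `F₅` with `i + 1` equations, and
`S_{r+1}` refutes `r`-i-reducedness.
-/

/-- An equation system over a binary information system with element set `A`
is a set of pairs `(g, δ)` encoding equations `g(x) = δ`. It is consistent
if it has a solution in `A`. -/
def Consistent {A : Type} (S : Set ((A → Bool) × Bool)) : Prop :=
  ∃ a : A, ∀ e ∈ S, e.1 a = e.2

/-- The system `S` uses only attributes from `F`. -/
def OverF {A : Type} (F : Set (A → Bool)) (S : Set ((A → Bool) × Bool)) : Prop :=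
  ∀ e ∈ S, e.1 ∈ F

/-- Solution set of an equation system. -/
def Sol {A : Type} (S : Set ((A → Bool) × Bool)) : Set A :=
  {a | ∀ e ∈ S, e.1 a = e.2}

/-- `U = (A, F)` is `r`-i-reduced: every inconsistent (finite) equation system over `U`
has an inconsistent subsystem with at most `r` equations. -/
def IReduced {A : Type} (F : Set (A → Bool)) (r : ℕ) : Prop :=
  ∀ S : Set ((A → Bool) × Bool), OverF F S → S.Finite → ¬ Consistent S →
    ∃ T ⊆ S, ¬ Consistent T ∧ T.ncard ≤ r

/-- `U = (A, F)` is `r`-reduced: every consistent (finite) equation system over `U`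
has a subsystem with the same solution set and at most `r` equations. -/
def RReduced {A : Type} (F : Set (A → Bool)) (r : ℕ) : Prop :=
  ∀ S : Set ((A → Bool) × Bool), OverF F S → S.Finite → Consistent S →
    ∃ T ⊆ S, Sol T = Sol S ∧ T.ncard ≤ r

/-- The element set `A₅ = ⋃ᵢ {(i,1), …, (i,i)}`. -/
def A5 : Type := {p : ℕ+ × ℕ+ // p.2 ≤ p.1}

/-- `fᵢ(a) = 1` iff `a ∈ {(i,1), …, (i,i)}`. -/
def fAttr (i : ℕ+) : A5 → Bool := fun a => decide (a.val.1 = i)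

/-- `f_{i,j}(a) = 1` iff `a = (i,j)`. -/
def gAttr (i j : ℕ+) : A5 → Bool := fun a => decide (a.val = (i, j))

/-- The attribute set of `U₅`. -/
def F5 : Set (A5 → Bool) := Set.range fAttr ∪ {g | ∃ i j : ℕ+, j ≤ i ∧ g = gAttr i j}

theorem Consistent.mono {A : Type} {S T : Set ((A → Bool) × Bool)} (hTS : T ⊆ S)
    (hS : Consistent S) : Consistent T :=
  let ⟨a, ha⟩ := hS
  ⟨a, fun e he => ha e (hTS he)⟩

theorem consistent_of_ssubset_of_forall_diff {A : Type} {S T : Set ((A → Bool) × Bool)}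
    (hTS : T ⊂ S) (h : ∀ e ∈ S, Consistent (S \ {e})) : Consistent T := by
  obtain ⟨e, heS, heT⟩ := Set.exists_of_ssubset hTS
  exact (h e heS).mono (Set.subset_sdiff_singleton hTS.subset heT)

theorem not_iReduced_of_minimal_inconsistent {A : Type} {F : Set (A → Bool)}
    {S : Set ((A → Bool) × Bool)} {r : ℕ} (hF : OverF F S) (hfin : S.Finite)
    (hS : ¬ Consistent S) (hmin : ∀ T ⊂ S, Consistent T) (hr : r < S.ncard) :
    ¬ IReduced F r := by
  intro hred
  obtain ⟨T, hTS, hT, hTr⟩ := hred S hF hfin hS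
  have hne : T ≠ S := by rintro rfl; omega
  exact hT (hmin T (hTS.ssubset_of_ne hne))

def S5 (i : ℕ+) : Set ((A5 → Bool) × Bool) :=
  insert (fAttr i, true) {e | ∃ j : ℕ+, j ≤ i ∧ e = (gAttr i j, false)}

theorem S5_eq_insert_image (i : ℕ+) :
    S5 i = insert (fAttr i, true) ((fun j => (gAttr i j, false)) '' Set.Iic i) := by
  simp only [S5, Set.image, Set.mem_Iic, eq_comm]

theorem not_consistent_S5 (i : ℕ+) : ¬ Consistent (S5 i) := by
  rintro ⟨a, ha⟩
  have ha₁ : a.val.1 = i := of_decide_eq_true (ha _ (Set.mem_insert _ _))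
  have ha₂ := ha (gAttr i a.val.2, false) (Set.mem_insert_of_mem _ ⟨_, ha₁ ▸ a.2, rfl⟩)
  simp [gAttr, Prod.ext_iff, ha₁] at ha₂

theorem consistent_S5_diff (i : ℕ+) : ∀ e ∈ S5 i, Consistent (S5 i \ {e}) := by
  rintro e (rfl | ⟨j, hj, rfl⟩)
  · refine ⟨⟨(i + 1, 1), one_le⟩, ?_⟩
    rintro e ⟨rfl | ⟨j, -, rfl⟩, he⟩
    · exact absurd rfl he
    · simp [gAttr, (PNat.lt_add_right i 1).ne']
  · refine ⟨⟨(i, j), hj⟩, ?_⟩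
    rintro e ⟨rfl | ⟨k, hk, rfl⟩, he⟩
    · simp [fAttr]
    · have hjk : j ≠ k := by rintro rfl; exact he rfl
      simp [gAttr, hjk]

theorem overF_S5 (i : ℕ+) : OverF F5 (S5 i) := by
  rintro e (rfl | ⟨j, hj, rfl⟩)
  · exact Or.inl ⟨i, rfl⟩
  · exact Or.inr ⟨i, j, hj, rfl⟩

theorem gAttr_injOn (i : ℕ+) : Set.InjOn (gAttr i) (Set.Iic i) := by
  intro j hj k _ hjk
  simpa [gAttr] using congrFun hjk ⟨(i, j), hj⟩

theorem finite_S5 (i : ℕ+) : (S5 i).Finite := by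
  rw [S5_eq_insert_image]
  exact ((Set.finite_Iic i).image _).insert _

theorem ncard_S5 (i : ℕ+) : (S5 i).ncard = i + 1 := by
  have hf : (fAttr i, true) ∉ (fun j => (gAttr i j, false)) '' Set.Iic i := by
    rintro ⟨j, -, h⟩
    exact Bool.false_ne_true (congrArg Prod.snd h)
  have hinj : Set.InjOn (fun j => (gAttr i j, false)) (Set.Iic i) :=
    fun j hj k hk hjk => gAttr_injOn i hj hk (congrArg Prod.fst hjk)
  have hIic : (Set.Iic i).ncard = i := by
    rw [← Finset.coe_Iic, Set.ncard_coe_finset, ← Finset.Icc_bot, PNat.card_Icc]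
    simp
  rw [S5_eq_insert_image, Set.ncard_insert_of_notMem hf, hinj.ncard_image, hIic]

/-- for every `i` the system
`Sᵢ = {fᵢ(x)=1, f_{i,1}(x)=0, …, f_{i,i}(x)=0}` is inconsistent on `A₅` while every
proper subsystem of it is consistent; hence `U₅` is not `r`-i-reduced for any `r`. -/
theorem stmt18 :
    (∀ i : ℕ+, ∀ S : Set ((A5 → Bool) × Bool),
      S = insert (fAttr i, true) {e | ∃ j : ℕ+, j ≤ i ∧ e = (gAttr i j, false)} →
      ¬ Consistent S ∧ ∀ T, T ⊂ S → Consistent T) ∧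
    ∀ r : ℕ, ¬ IReduced F5 r := by
  have minimal (i : ℕ+) : ¬ Consistent (S5 i) ∧ ∀ T ⊂ S5 i, Consistent T :=
    ⟨not_consistent_S5 i,
      fun _ hT => consistent_of_ssubset_of_forall_diff hT (consistent_S5_diff i)⟩
  refine ⟨fun i S hS => hS ▸ minimal i, fun r => ?_⟩
  refine not_iReduced_of_minimal_inconsistent (overF_S5 r.succPNat) (finite_S5 _)
    (minimal _).1 (minimal _).2 ?_
  rw [ncard_S5, Nat.succPNat_coe]
  omega
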